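/- Let n ≥ 2 and let λ_1 ≥ λ_2 ≥ ⋯ ≥ λ_n be real numbers satisfying ∑_{i=1}^n arctan λ_i ≥ (n−2)π/2. Then σ_k(λ_1,…,λ_n) ≥ 0 for every k with 1 ≤ k ≤ n−1. -/

import Mathlib

/-!
If every `λ_i` is nonnegative there is nothing to prove. Otherwise some `λ_a = -c < 0`; as each
`arctan` is below `π/2`, the hypothesis forces `arctan λ_j ≥ arctan c`, i.e. `λ_j ≥ c > 0`, for all
`j ≠ a`. Since `arctan λ_j⁻¹ = π/2 - arctan λ_j`, the hypothesis then reads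
`∑_{j ≠ a} arctan λ_j⁻¹ ≤ arctan c⁻¹`, and subadditivity of `arctan` on `[0, ∞)` yields
`∑_{j ≠ a} λ_j⁻¹ ≤ c⁻¹`. For positive `μ` one has `σ_{k-1}(μ) ≤ σ_k(μ) ∑ μ_j⁻¹`, so with `λ'` the
family without `λ_a` we get `σ_k(λ) = σ_k(λ') - c σ_{k-1}(λ') ≥ 0`.
-/

open Real

/-- The `k`-th elementary symmetric polynomial of `λ_1, …, λ_n`. -/
noncomputable def esymm (n k : ℕ) (lam : Fin n → ℝ) : ℝ :=
  ∑ s ∈ Finset.powersetCard k (Finset.univ : Finset (Fin n)), ∏ i ∈ s, lam i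

namespace Real

theorem arctan_add_le {x y : ℝ} (hx : 0 ≤ x) (hy : 0 ≤ y) :
    arctan (x + y) ≤ arctan x + arctan y := by
  rcases lt_or_ge (x * y) 1 with hxy | hxy
  · rw [arctan_add hxy, arctan_le_arctan_iff, le_div_iff₀ (by linarith)]
    nlinarith [mul_nonneg (add_nonneg hx hy) (mul_nonneg hx hy)]
  · have hx0 : 0 < x := hx.lt_of_ne (by rintro rfl; norm_num at hxy)
    have hinv : x⁻¹ ≤ y := by rw [inv_le_iff_one_le_mul₀' hx0]; exact hxy
    calc arctan (x + y) ≤ π / 2 := (arctan_lt_pi_div_two _).le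
      _ = arctan x + arctan x⁻¹ := by rw [arctan_inv_of_pos hx0]; ring
      _ ≤ arctan x + arctan y := by gcongr

theorem arctan_multiset_sum_le {s : Multiset ℝ} (hs : ∀ x ∈ s, 0 ≤ x) :
    arctan s.sum ≤ (s.map arctan).sum :=
  Multiset.le_sum_of_subadditive_on_pred arctan (0 ≤ ·) arctan_zero.le le_rfl
    (fun _ _ => arctan_add_le) (fun _ _ => add_nonneg) s hs

end Real

namespace Multiset

theorem esymm_cons_succ {R : Type*} [CommSemiring R] (a : R) (s : Multiset R) (k : ℕ) :
    (a ::ₘ s).esymm (k + 1) = s.esymm (k + 1) + a * s.esymm k := by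
  simp only [esymm, powersetCard_cons, map_add, sum_add, map_map, Function.comp_def, prod_cons,
    sum_map_mul_left]

theorem esymm_zero {R : Type*} [CommSemiring R] (s : Multiset R) : s.esymm 0 = 1 := by
  simp [esymm]

theorem esymm_nonneg {R : Type*} [CommSemiring R] [PartialOrder R] [IsOrderedRing R]
    {s : Multiset R} (hs : ∀ x ∈ s, 0 ≤ x) (k : ℕ) : 0 ≤ s.esymm k :=
  sum_nonneg fun _ hp => by
    obtain ⟨t, ht, rfl⟩ := mem_map.1 hp
    exact prod_nonneg fun x hx => hs x (mem_of_le (mem_powersetCard.1 ht).1 hx)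

theorem esymm_le_esymm_succ_mul_sum_inv {s : Multiset ℝ} (hs : ∀ x ∈ s, 0 < x) {k : ℕ}
    (hk : k < card s) : s.esymm k ≤ s.esymm (k + 1) * (s.map (·⁻¹)).sum := by
  induction s using Multiset.induction_on generalizing k with
  | empty => simp at hk
  | cons a t ih =>
    have ha : 0 < a := hs a (mem_cons_self a t)
    have ht : ∀ x ∈ t, 0 < x := fun x hx => hs x (mem_cons_of_mem hx)
    have hinv : 0 ≤ (t.map (·⁻¹)).sum := sum_nonneg fun _ hy => by
      obtain ⟨x, hx, rfl⟩ := mem_map.1 hy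
      exact (inv_pos.2 (ht x hx)).le
    have ht_esymm (j : ℕ) : 0 ≤ t.esymm j := esymm_nonneg (fun x hx => (ht x hx).le) j
    rw [map_cons, sum_cons, esymm_cons_succ]
    cases k with
    | zero =>
      simp only [esymm_zero, mul_one]
      have haa : a * a⁻¹ = 1 := mul_inv_cancel₀ ha.ne'
      have he1 := ht_esymm 1
      nlinarith [mul_nonneg he1 (add_nonneg (inv_pos.2 ha).le hinv), mul_nonneg ha.le hinv]
    | succ j =>
      rw [esymm_cons_succ]
      have hj : j < card t := by simpa using hk
      have hstep := mul_le_mul_of_nonneg_left (ih ht hj) ha.le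
      have hcancel : a * t.esymm (j + 1) * a⁻¹ = t.esymm (j + 1) := by field_simp
      nlinarith [mul_nonneg (ht_esymm (j + 2)) (add_nonneg (inv_pos.2 ha).le hinv)]

theorem le_of_mem_of_sum_arctan_ge {t : Multiset ℝ} {c : ℝ}
    (h : ((card t : ℝ) - 1) * π / 2 + arctan c ≤ (t.map arctan).sum) {x : ℝ} (hx : x ∈ t) :
    c ≤ x := by
  obtain ⟨u, rfl⟩ := exists_cons_of_mem hx
  have hu : (u.map arctan).sum ≤ card (u.map arctan) • (π / 2) :=
    sum_le_card_nsmul _ _ fun _ hy => by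
      obtain ⟨y, -, rfl⟩ := mem_map.1 hy
      exact (arctan_lt_pi_div_two y).le
  simp only [card_cons, Nat.cast_add, Nat.cast_one, map_cons, sum_cons] at h
  rw [card_map, nsmul_eq_mul] at hu
  rw [← arctan_le_arctan_iff]
  linarith

theorem sum_inv_le_inv_of_sum_arctan_ge {t : Multiset ℝ} {c : ℝ} (hc : 0 < c)
    (h : ((card t : ℝ) - 1) * π / 2 + arctan c ≤ (t.map arctan).sum) :
    (t.map (·⁻¹)).sum ≤ c⁻¹ := by
  have hpos : ∀ x ∈ t, 0 < x := fun x hx => hc.trans_le (le_of_mem_of_sum_arctan_ge h hx)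
  have hcompl : (t.map fun x => arctan x⁻¹) = t.map fun x => π / 2 - arctan x :=
    map_congr rfl fun x hx => arctan_inv_of_pos (hpos x hx)
  have hsum : ((t.map (·⁻¹)).map arctan).sum ≤ arctan c⁻¹ := by
    rw [map_map, Function.comp_def, hcompl, sum_map_sub, map_const', sum_replicate, nsmul_eq_mul,
      arctan_inv_of_pos hc]
    linarith
  rw [← arctan_le_arctan_iff]
  refine (arctan_multiset_sum_le fun y hy => ?_).trans hsum
  obtain ⟨x, hx, rfl⟩ := mem_map.1 hy
  exact (inv_pos.2 (hpos x hx)).le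

theorem esymm_nonneg_of_sum_arctan_ge {s : Multiset ℝ}
    (hs : ((card s : ℝ) - 2) * π / 2 ≤ (s.map arctan).sum) {k : ℕ} (hk : k < card s) :
    0 ≤ s.esymm k := by
  by_cases hnonneg : ∀ x ∈ s, 0 ≤ x
  · exact esymm_nonneg hnonneg k
  push Not at hnonneg
  obtain ⟨a, ha_mem, ha⟩ := hnonneg
  obtain ⟨t, rfl⟩ := exists_cons_of_mem ha_mem
  have ht : ((card t : ℝ) - 1) * π / 2 + arctan (-a) ≤ (t.map arctan).sum := by
    simp only [card_cons, Nat.cast_add, Nat.cast_one, map_cons, sum_cons] at hs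
    rw [arctan_neg]
    linarith
  have hc : 0 < -a := neg_pos.2 ha
  have hpos : ∀ x ∈ t, 0 < x := fun x hx => hc.trans_le (le_of_mem_of_sum_arctan_ge ht hx)
  obtain _ | j := k
  · rw [esymm_zero]
    exact zero_le_one
  have hj : j < card t := by simpa using hk
  have key := (esymm_le_esymm_succ_mul_sum_inv hpos hj).trans
    (mul_le_mul_of_nonneg_left (sum_inv_le_inv_of_sum_arctan_ge hc ht)
      (esymm_nonneg (fun x hx => (hpos x hx).le) _))
  rw [esymm_cons_succ]
  rw [← div_eq_mul_inv, le_div_iff₀ hc] at key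
  linarith

end Multiset

theorem ordered_eigen_sigma_nonneg_general
    (n : ℕ) (lam : Fin n → ℝ)
    (hsum : ((n : ℝ) - 2) * Real.pi / 2 ≤ ∑ i, Real.arctan (lam i)) :
    ∀ k : ℕ, 1 ≤ k → k ≤ n - 1 → 0 ≤ esymm n k lam := by
  intro k hk1 hk
  rw [esymm, ← Finset.esymm_map_val]
  apply Multiset.esymm_nonneg_of_sum_arctan_ge
  · rw [Multiset.card_map, Finset.card_val, Finset.card_univ, Fintype.card_fin, Multiset.map_map]
    exact hsum
  · simp only [Multiset.card_map, Finset.card_val, Finset.card_univ, Fintype.card_fin]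
    omega

/-- For ordered reals `λ_1 ≥ ⋯ ≥ λ_n` with `∑ arctan λ_i ≥ (n-2)π/2`, `n ≥ 2`,
all elementary symmetric functions `σ_k(λ)` with `1 ≤ k ≤ n-1` are nonnegative. -/
theorem ordered_eigen_sigma_nonneg
    (n : ℕ) (hn : 2 ≤ n) (lam : Fin n → ℝ)
    (hsort : ∀ i j : Fin n, i ≤ j → lam j ≤ lam i)
    (hsum : ((n : ℝ) - 2) * Real.pi / 2 ≤ ∑ i, Real.arctan (lam i)) :
    ∀ k : ℕ, 1 ≤ k → k ≤ n - 1 → 0 ≤ esymm n k lam :=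
  ordered_eigen_sigma_nonneg_general n lam hsum
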